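/- arXiv:2112.04355 — 4 statements merged into one kernel-verified Lean document; each statement's English description precedes it below -/
import Mathlib

section
/- Fix positive integers p, q, N, L and set m = p + q. For k = 0, …, N−1 let D(k) ∈ ℝ^{L×m} be the data matrix whose ℓ-th row is the concatenated state-control sample [x_ℓ(k)ᵀ u_ℓ(k)ᵀ], let λ_1, …, λ_{N-1} > 0, let V = blockdiag(D(0), …, D(N−1)), let F be the block forward-difference matrix, Υ = diag(λ_1 I_m, …, λ_{N-1} I_m), and 𝒜 = VᵀV + FᵀΥF. If there exist m = p + q pairs (ℓ, k) ∈ {1, …, L} × {0, …, N−1} such that the corresponding m rows [x_ℓ(k)ᵀ u_ℓ(k)ᵀ] of the matrices D(k) are linearly independent, then 𝒜 is invertible. -/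
open Matrix

/-- The `(N−1)m × Nm` block forward-difference matrix `F` (here `N = n + 1`):
`(Fη)(k) = η(k) − η(k−1)`. -/
def Fmat (n m : ℕ) : Matrix (Fin n × Fin m) (Fin (n + 1) × Fin m) ℝ :=
  fun r c =>
    (if c.1 = r.1.succ then (1 : ℝ) else if c.1 = r.1.castSucc then (-1 : ℝ) else 0) *
      (if r.2 = c.2 then (1 : ℝ) else 0)

/-- The block-diagonal weight matrix `Υ = diag(λ_1 I_m, …, λ_{N-1} I_m)`. -/
def Ups (n m : ℕ) (lam : Fin n → ℝ) : Matrix (Fin n × Fin m) (Fin n × Fin m) ℝ :=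
  fun r c => if r = c then lam r.1 else 0

/-- The data matrix `D(k) ∈ ℝ^{L×(p+q)}` whose `ℓ`-th row is the concatenated state-control
sample `[x_ℓ(k)ᵀ u_ℓ(k)ᵀ]`. -/
def Dmat (p q n L : ℕ) (x : Fin L → Fin (n + 1) → Fin p → ℝ)
    (u : Fin L → Fin (n + 1) → Fin q → ℝ) (k : Fin (n + 1)) :
    Matrix (Fin L) (Fin (p + q)) ℝ :=
  fun ℓ => Fin.append (x ℓ k) (u ℓ k)

/-- The block-diagonal data matrix `V = blockdiag(D(0), …, D(N−1))`. -/
def Vblk (p q n L : ℕ) (x : Fin L → Fin (n + 1) → Fin p → ℝ)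
    (u : Fin L → Fin (n + 1) → Fin q → ℝ) :
    Matrix (Fin (n + 1) × Fin L) (Fin (n + 1) × Fin (p + q)) ℝ :=
  fun r c => if r.1 = c.1 then Dmat p q n L x u r.1 r.2 c.2 else 0

/-! The quadratic form of `𝒜 = VᵀV + FᵀΥF` is `|Vz|² + ∑ λ_k |(Fz)_k|²`, so `𝒜` is positive
definite as soon as `Vz = 0` and `Fz = 0` force `z = 0`. Now `Fz = 0` says that `z(k) = c` is
constant in time, and then `Vz = 0` says `D(k) c = 0` for every `k`; in particular `c` is
orthogonal to the `p + q` selected linearly independent rows, hence `c = 0`. -/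

/- `Bᵀ B + Cᵀ diag(w) C = Gᵀ diag(1, w) G` for the stacked matrix `G = [B; C]`, which is
injective exactly under `h`. -/
theorem Matrix.isUnit_transpose_mul_add_transpose_mul_diagonal_mul
    {ι κ μ : Type*} [Fintype ι] [Fintype κ] [Fintype μ] [DecidableEq ι] [DecidableEq μ]
    (B : Matrix κ ι ℝ) (C : Matrix μ ι ℝ) {w : μ → ℝ} (hw : ∀ i, 0 < w i)
    (h : ∀ z, B *ᵥ z = 0 → C *ᵥ z = 0 → z = 0) :
    IsUnit (Bᵀ * B + Cᵀ * diagonal w * C) := by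
  classical
  have hW : (fromBlocks 1 0 0 (diagonal w) : Matrix (κ ⊕ μ) (κ ⊕ μ) ℝ).PosDef := by
    rw [← diagonal_one, fromBlocks_diagonal, posDef_diagonal_iff]
    rintro (i | i) <;> simp [hw]
  have hG : Function.Injective (fromRows B C).mulVec := by
    intro a b hab
    rw [← sub_eq_zero, ← mulVec_sub, fromRows_mulVec] at hab
    exact sub_eq_zero.1 <|
      h _ (funext fun i => congr_fun hab (.inl i)) (funext fun i => congr_fun hab (.inr i))
  simpa [transpose_fromRows, fromBlocks_mul_fromRows, fromCols_mul_fromRows, Matrix.mul_assoc]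
    using (hW.conjTranspose_mul_mul_same hG).isUnit

theorem Matrix.eq_zero_of_linearIndependent_of_dotProduct_eq_zero {K n : Type*} [Field K]
    [Fintype n] [DecidableEq n] {v : n → n → K} (hv : LinearIndependent K v) {c : n → K}
    (h : ∀ i, v i ⬝ᵥ c = 0) : c = 0 := by
  have hinj : Function.Injective (of v).mulVec :=
    mulVec_injective_iff_isUnit.2 (linearIndependent_rows_iff_isUnit.1 hv)
  exact hinj (funext fun i => by simpa [mulVec] using h i)

lemma Ups_eq_diagonal (n m : ℕ) (lam : Fin n → ℝ) :
    Ups n m lam = diagonal fun r => lam r.1 := by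
  ext r c
  by_cases hrc : r = c <;> simp [Ups, hrc]

lemma Fmat_mulVec_apply (n m : ℕ) (z : Fin (n + 1) × Fin m → ℝ) (r : Fin n × Fin m) :
    (Fmat n m *ᵥ z) r = z (r.1.succ, r.2) - z (r.1.castSucc, r.2) := by
  have hne : r.1.succ ≠ r.1.castSucc := Fin.castSucc_lt_succ.ne'
  simp only [mulVec, dotProduct, Fmat, Fintype.sum_prod_type, mul_ite, mul_one,
    mul_zero, ite_mul, one_mul, neg_mul, zero_mul, Finset.sum_ite_eq, Finset.mem_univ, if_true]
  rw [Finset.sum_eq_add_of_mem r.1.succ r.1.castSucc (Finset.mem_univ _) (Finset.mem_univ _) hne]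
  · simp [hne.symm, sub_eq_add_neg]
  · intro c _ hc
    simp [hc.1, hc.2]

lemma eq_of_Fmat_mulVec_eq_zero {n m : ℕ} {z : Fin (n + 1) × Fin m → ℝ}
    (hz : Fmat n m *ᵥ z = 0) (k : Fin (n + 1)) (j : Fin m) : z (k, j) = z (0, j) := by
  induction k using Fin.induction with
  | zero => rfl
  | succ i ih =>
    have hstep := congr_fun hz (i, j)
    rw [Fmat_mulVec_apply, Pi.zero_apply, sub_eq_zero] at hstep
    exact hstep.trans ih

lemma Vblk_mulVec_apply (p q n L : ℕ) (x : Fin L → Fin (n + 1) → Fin p → ℝ)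
    (u : Fin L → Fin (n + 1) → Fin q → ℝ) (z : Fin (n + 1) × Fin (p + q) → ℝ)
    (k : Fin (n + 1)) (ℓ : Fin L) :
    (Vblk p q n L x u *ᵥ z) (k, ℓ) = (Dmat p q n L x u k *ᵥ fun j => z (k, j)) ℓ := by
  simp [Vblk, mulVec, dotProduct, Fintype.sum_prod_type, ite_mul]

theorem stmt_7_general (p q n L : ℕ)
    (x : Fin L → Fin (n + 1) → Fin p → ℝ) (u : Fin L → Fin (n + 1) → Fin q → ℝ)
    (lam : Fin n → ℝ) (hlam : ∀ k, 0 < lam k)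
    (hind : ∃ sel : Fin (p + q) → Fin L × Fin (n + 1),
      LinearIndependent ℝ (fun j => Fin.append (x (sel j).1 (sel j).2) (u (sel j).1 (sel j).2))) :
    IsUnit ((Vblk p q n L x u)ᵀ * Vblk p q n L x u +
      (Fmat n (p + q))ᵀ * Ups n (p + q) lam * Fmat n (p + q)) := by
  obtain ⟨sel, hsel⟩ := hind
  rw [Ups_eq_diagonal]
  refine isUnit_transpose_mul_add_transpose_mul_diagonal_mul _ _ (fun r => hlam r.1)
    fun z hV hF => ?_
  have hconst := eq_of_Fmat_mulVec_eq_zero hF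
  have hc : (fun j => z (0, j)) = 0 :=
    eq_zero_of_linearIndependent_of_dotProduct_eq_zero hsel fun i => by
      have hrow := congr_fun hV ((sel i).2, (sel i).1)
      rwa [Vblk_mulVec_apply, funext (hconst (sel i).2)] at hrow
  funext r
  exact (hconst r.1 r.2).trans (congr_fun hc r.2)

/-- (Theorem 2 of the paper.)  With `m = p + q`, `V = blockdiag(D(k))`,
`F` the block forward-difference matrix, `Υ` the block weight matrix with all `λ_k > 0`,
and `𝒜 = VᵀV + FᵀΥF`: if there exist `p + q` pairs `(ℓ, k)` such that the corresponding
rows `[x_ℓ(k)ᵀ u_ℓ(k)ᵀ]` are linearly independent, then `𝒜` is invertible. -/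
theorem stmt_7 (p q n L : ℕ) (hp : 0 < p) (hq : 0 < q) (hL : 0 < L)
    (x : Fin L → Fin (n + 1) → Fin p → ℝ) (u : Fin L → Fin (n + 1) → Fin q → ℝ)
    (lam : Fin n → ℝ) (hlam : ∀ k, 0 < lam k)
    (hind : ∃ sel : Fin (p + q) → Fin L × Fin (n + 1),
      LinearIndependent ℝ (fun j => Fin.append (x (sel j).1 (sel j).2) (u (sel j).1 (sel j).2))) :
    IsUnit ((Vblk p q n L x u)ᵀ * Vblk p q n L x u +
      (Fmat n (p + q))ᵀ * Ups n (p + q) lam * Fmat n (p + q)) :=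
  stmt_7_general p q n L x u lam hlam hind
end

section
/- Fix positive integers p, q, N, L and set m = p + q. Let D(k) ∈ ℝ^{L×m} (k = 0, …, N−1) be data matrices, X'(k) ∈ ℝ^{p×L} target matrices, λ_1, …, λ_{N-1} > 0, and define the cost f(C) = ½ Σ_{k=0}^{N−1} ‖D(k) C(k) − X'(k)ᵀ‖_F² + ½ Σ_{k=1}^{N−1} λ_k ‖C(k) − C(k−1)‖_F² for C = (C(0), …, C(N−1)) with each C(k) ∈ ℝ^{m×p}. Then f has a unique global minimizer if and only if the m×m matrix Σ_{k=0}^{N−1} D(k)ᵀ D(k) is positive definite. -/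
open Matrix

/-- The squared Frobenius norm `‖M‖_F² = Σ_{i,j} M_{ij}²` of a real matrix. -/
def frobSq {α β : Type*} [Fintype α] [Fintype β] (M : Matrix α β ℝ) : ℝ :=
  ∑ i, ∑ j, (M i j) ^ 2

/-- The regularized least-squares identification cost
`f(C) = ½ Σ_{k=0}^{N−1} ‖D(k) C(k) − X'(k)ᵀ‖_F² + ½ Σ_{k=1}^{N−1} λ_k ‖C(k) − C(k−1)‖_F²`
(here `N = n + 1`). -/
noncomputable def cost (p q n L : ℕ) (D : Fin (n + 1) → Matrix (Fin L) (Fin (p + q)) ℝ)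
    (X' : Fin (n + 1) → Matrix (Fin p) (Fin L) ℝ) (lam : Fin n → ℝ)
    (C : Fin (n + 1) → Matrix (Fin (p + q)) (Fin p) ℝ) : ℝ :=
  (1 / 2) * ∑ k : Fin (n + 1), frobSq (D k * C k - (X' k)ᵀ) +
    (1 / 2) * ∑ k : Fin n, lam k * frobSq (C k.succ - C k.castSucc)

/-!
The cost is `f(C) = ½ ‖T C - b‖²` for the linear map `T` stacking the residuals `D(k) C(k)` and
`√λ_k (C(k+1) - C(k))`. The minimizers of `‖T C - b‖` are the preimages under `T` of the
orthogonal projection of `b` onto `range T`, so the minimizer is unique iff `T` is injective.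
As all `λ_k > 0`, `T C = 0` forces `C` to be constant, equal to some `M` with `D(k) M = 0` for
all `k`; hence `T` is injective iff the `D(k)` have no common nonzero kernel vector, which is
positive definiteness of `Σ D(k)ᵀ D(k)`, whose quadratic form is `v ↦ Σ ‖D(k) v‖²`.
-/

section LeastSquares

variable {V W : Type*} [AddCommGroup V] [Module ℝ V]
  [NormedAddCommGroup W] [InnerProductSpace ℝ W]

theorem Submodule.norm_sub_sq_eq_norm_sub_starProjection_sq_add (K : Submodule ℝ W)
    [K.HasOrthogonalProjection] (b : W) {w : W} (hw : w ∈ K) :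
    ‖b - w‖ ^ 2 = ‖b - K.starProjection b‖ ^ 2 + ‖K.starProjection b - w‖ ^ 2 := by
  have h := norm_add_sq_eq_norm_sq_add_norm_sq_real
    (K.starProjection_inner_eq_zero b _ (K.sub_mem (K.starProjection_apply_mem b) hw))
  rw [sub_add_sub_cancel] at h
  simpa only [sq] using h

theorem LinearMap.forall_norm_sub_le_iff_eq_starProjection (T : V →ₗ[ℝ] W)
    [(LinearMap.range T).HasOrthogonalProjection] (b : W) (x : V) :
    (∀ y, ‖T x - b‖ ≤ ‖T y - b‖) ↔ T x = (LinearMap.range T).starProjection b := by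
  set K := LinearMap.range T
  have pyth (y : V) :
      ‖T y - b‖ ^ 2 = ‖b - K.starProjection b‖ ^ 2 + ‖K.starProjection b - T y‖ ^ 2 := by
    rw [norm_sub_rev]
    exact K.norm_sub_sq_eq_norm_sub_starProjection_sq_add b (LinearMap.mem_range_self T y)
  obtain ⟨x₀, hx₀⟩ := K.starProjection_apply_mem b
  constructor
  · intro hmin
    have h := pow_le_pow_left₀ (norm_nonneg _) (hmin x₀) 2
    rw [pyth, pyth x₀, hx₀, sub_self, norm_zero] at h
    have : ‖K.starProjection b - T x‖ = 0 := by nlinarith [norm_nonneg (K.starProjection b - T x)]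
    exact (sub_eq_zero.mp (norm_eq_zero.mp this)).symm
  · intro hx y
    refine (pow_le_pow_iff_left₀ (norm_nonneg _) (norm_nonneg _) two_ne_zero).mp ?_
    rw [pyth, pyth y, hx, sub_self, norm_zero]
    nlinarith [norm_nonneg (K.starProjection b - T y)]

theorem LinearMap.existsUnique_eq_iff_injective (T : V →ₗ[ℝ] W) {c : W}
    (hc : c ∈ LinearMap.range T) : (∃! x, T x = c) ↔ Function.Injective T := by
  obtain ⟨x₀, rfl⟩ := hc
  refine ⟨fun h v v' hvv' => ?_, fun hT => ⟨x₀, rfl, fun x hx => hT hx⟩⟩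
  have : T (x₀ + (v - v')) = T x₀ := by rw [map_add, map_sub, hvv', sub_self, add_zero]
  exact sub_eq_zero.mp (by simpa using h.unique this rfl)

theorem LinearMap.existsUnique_forall_norm_sub_le_iff_injective (T : V →ₗ[ℝ] W)
    [(LinearMap.range T).HasOrthogonalProjection] (b : W) :
    (∃! x, ∀ y, ‖T x - b‖ ≤ ‖T y - b‖) ↔ Function.Injective T := by
  simp only [T.forall_norm_sub_le_iff_eq_starProjection]
  exact T.existsUnique_eq_iff_injective ((LinearMap.range T).starProjection_apply_mem b)

end LeastSquares

section GramMatrix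

variable {ι l m r : Type*} [Fintype m]

theorem Matrix.dotProduct_sum_transpose_mul_self_mulVec [Fintype ι] [Fintype l]
    (D : ι → Matrix l m ℝ) (v : m → ℝ) :
    v ⬝ᵥ ((∑ k, (D k)ᵀ * D k) *ᵥ v) = ∑ k, (D k *ᵥ v) ⬝ᵥ (D k *ᵥ v) := by
  simp only [sum_mulVec, dotProduct_sum, ← mulVec_mulVec, dotProduct_mulVec, vecMul_transpose]

theorem Matrix.posDef_sum_transpose_mul_self_iff [Fintype ι] [Fintype l] (D : ι → Matrix l m ℝ) :
    (∑ k, (D k)ᵀ * D k).PosDef ↔ ∀ v, (∀ k, D k *ᵥ v = 0) → v = 0 := by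
  have hsemi : (∑ k, (D k)ᵀ * D k).PosSemidef :=
    posSemidef_sum _ fun k _ => by simpa using posSemidef_conjTranspose_mul_self (D k)
  have hsq (w : l → ℝ) : 0 ≤ w ⬝ᵥ w := by simpa using dotProduct_star_self_nonneg w
  have hzero (v : m → ℝ) : ∑ k, (D k *ᵥ v) ⬝ᵥ (D k *ᵥ v) = 0 ↔ ∀ k, D k *ᵥ v = 0 := by
    simp only [Finset.sum_eq_zero_iff_of_nonneg fun k _ => hsq (D k *ᵥ v), Finset.mem_univ,
      true_implies, dotProduct_self_eq_zero]
  rw [posDef_iff_dotProduct_mulVec]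
  simp only [star_trivial, dotProduct_sum_transpose_mul_self_mulVec, hsemi.isHermitian, true_and]
  refine forall_congr' fun v => ?_
  rw [← hzero, not_imp_comm, (Finset.sum_nonneg fun k _ => hsq _).lt_iff_ne', ne_eq, not_not]

theorem Matrix.forall_mul_eq_zero_imp_eq_zero_iff [Nonempty r] (D : ι → Matrix l m ℝ) :
    (∀ M : Matrix m r ℝ, (∀ k, D k * M = 0) → M = 0) ↔ ∀ v, (∀ k, D k *ᵥ v = 0) → v = 0 := by
  refine ⟨fun h v hv => ?_, fun h M hM => ?_⟩
  · have := h (replicateCol r v) fun k => by rw [← replicateCol_mulVec, hv, replicateCol_zero]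
    simpa using this
  · ext i j
    have := h (fun i => M i j) fun k => funext fun a => by
      simpa [mul_apply, mulVec, dotProduct] using congrFun (congrFun (hM k) a) j
    exact congrFun this i

end GramMatrix

section StackedResidual

variable {l m r : Type*} {n : ℕ}

noncomputable def stackedMap [Fintype m] (D : Fin (n + 1) → Matrix l m ℝ) (lam : Fin n → ℝ) :
    (Fin (n + 1) → Matrix m r ℝ) →ₗ[ℝ]
      EuclideanSpace ℝ ((Fin (n + 1) × l × r) ⊕ (Fin n × m × r)) where
  toFun C := WithLp.toLp 2 (Sum.elim (fun t => (D t.1 * C t.1) t.2.1 t.2.2)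
    (fun t => √(lam t.1) * (C t.1.succ - C t.1.castSucc) t.2.1 t.2.2))
  map_add' C C' := by
    ext (⟨k, i, j⟩ | ⟨k, i, j⟩)
    · simp [Matrix.mul_add]
    · simp only [PiLp.add_apply, Sum.elim_inr, Pi.add_apply, Matrix.add_apply, Matrix.sub_apply]
      ring
  map_smul' c C := by
    ext (⟨k, i, j⟩ | ⟨k, i, j⟩) <;> simp [mul_sub, mul_left_comm]

noncomputable def stackedTarget (X' : Fin (n + 1) → Matrix r l ℝ) :
    EuclideanSpace ℝ ((Fin (n + 1) × l × r) ⊕ (Fin n × m × r)) :=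
  WithLp.toLp 2 (Sum.elim (fun t => X' t.1 t.2.2 t.2.1) 0)

theorem stackedMap_eq_zero_iff [Fintype m] {D : Fin (n + 1) → Matrix l m ℝ} {lam : Fin n → ℝ}
    (hlam : ∀ k, 0 < lam k) {C : Fin (n + 1) → Matrix m r ℝ} :
    stackedMap D lam C = 0 ↔ (∀ k, D k * C k = 0) ∧ ∀ k : Fin n, C k.succ = C k.castSucc := by
  have hsqrt (k : Fin n) : √(lam k) ≠ 0 := Real.sqrt_ne_zero'.mpr (hlam k)
  simp [stackedMap, WithLp.ext_iff, funext_iff, Sum.forall, Prod.forall, ← Matrix.ext_iff, hsqrt,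
    sub_eq_zero]

theorem injective_stackedMap_iff [Fintype m] {D : Fin (n + 1) → Matrix l m ℝ} {lam : Fin n → ℝ}
    (hlam : ∀ k, 0 < lam k) :
    Function.Injective (stackedMap (r := r) D lam) ↔
      ∀ M : Matrix m r ℝ, (∀ k, D k * M = 0) → M = 0 := by
  simp only [injective_iff_map_eq_zero, stackedMap_eq_zero_iff hlam]
  refine ⟨fun h M hM => ?_, fun h C ⟨hD, hstep⟩ => ?_⟩
  · exact congrFun (h (fun _ => M) ⟨hM, fun _ => rfl⟩) 0
  · have hconst (k : Fin (n + 1)) : C k = C 0 := by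
      induction k using Fin.induction with
      | zero => rfl
      | succ k ih => rw [hstep k, ih]
    have h0 : C 0 = 0 := h (C 0) fun k => hconst k ▸ hD k
    funext k
    rw [hconst k, h0, Pi.zero_apply]

end StackedResidual

theorem cost_eq_half_norm_sq {p q n L : ℕ} (D : Fin (n + 1) → Matrix (Fin L) (Fin (p + q)) ℝ)
    (X' : Fin (n + 1) → Matrix (Fin p) (Fin L) ℝ) {lam : Fin n → ℝ} (hlam : ∀ k, 0 < lam k)
    (C : Fin (n + 1) → Matrix (Fin (p + q)) (Fin p) ℝ) :
    cost p q n L D X' lam C = 1 / 2 * ‖stackedMap D lam C - stackedTarget X'‖ ^ 2 := by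
  rw [cost, EuclideanSpace.real_norm_sq_eq, Fintype.sum_sum_type, mul_add]
  congr 2
  · simp [frobSq, Fintype.sum_prod_type, stackedMap, stackedTarget]
  · simp [frobSq, Fintype.sum_prod_type, stackedMap, stackedTarget, mul_pow,
      Real.sq_sqrt (hlam _).le, Finset.mul_sum]

theorem stmt_8_general (p q n L : ℕ) (hp : 0 < p)
    (D : Fin (n + 1) → Matrix (Fin L) (Fin (p + q)) ℝ)
    (X' : Fin (n + 1) → Matrix (Fin p) (Fin L) ℝ)
    (lam : Fin n → ℝ) (hlam : ∀ k, 0 < lam k) :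
    (∃! C : Fin (n + 1) → Matrix (Fin (p + q)) (Fin p) ℝ,
      ∀ C' : Fin (n + 1) → Matrix (Fin (p + q)) (Fin p) ℝ,
        cost p q n L D X' lam C ≤ cost p q n L D X' lam C') ↔
    (∑ k : Fin (n + 1), (D k)ᵀ * D k).PosDef := by
  have : Nonempty (Fin p) := ⟨⟨0, hp⟩⟩
  have hcost (C C' : Fin (n + 1) → Matrix (Fin (p + q)) (Fin p) ℝ) :
      cost p q n L D X' lam C ≤ cost p q n L D X' lam C' ↔
        ‖stackedMap D lam C - stackedTarget X'‖ ≤ ‖stackedMap D lam C' - stackedTarget X'‖ := by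
    rw [cost_eq_half_norm_sq D X' hlam, cost_eq_half_norm_sq D X' hlam,
      mul_le_mul_iff_right₀ one_half_pos, sq_le_sq₀ (norm_nonneg _) (norm_nonneg _)]
  simp only [hcost]
  rw [LinearMap.existsUnique_forall_norm_sub_le_iff_injective, injective_stackedMap_iff hlam,
    forall_mul_eq_zero_imp_eq_zero_iff, posDef_sum_transpose_mul_self_iff]

/-- (Theorem 1 of the paper.)  The regularized least-squares identification
cost `f` has a unique global minimizer iff the `(p+q) × (p+q)` matrix
`Σ_{k=0}^{N−1} D(k)ᵀ D(k)` is positive definite. -/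
theorem stmt_8 (p q n L : ℕ) (hp : 0 < p) (hq : 0 < q) (hL : 0 < L)
    (D : Fin (n + 1) → Matrix (Fin L) (Fin (p + q)) ℝ)
    (X' : Fin (n + 1) → Matrix (Fin p) (Fin L) ℝ)
    (lam : Fin n → ℝ) (hlam : ∀ k, 0 < lam k) :
    (∃! C : Fin (n + 1) → Matrix (Fin (p + q)) (Fin p) ℝ,
      ∀ C' : Fin (n + 1) → Matrix (Fin (p + q)) (Fin p) ℝ,
        cost p q n L D X' lam C ≤ cost p q n L D X' lam C') ↔
    (∑ k : Fin (n + 1), (D k)ᵀ * D k).PosDef :=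
  stmt_8_general p q n L hp D X' lam hlam
end

section
/- Fix positive integers p, q, N, L and set m = p + q. Let D(k) ∈ ℝ^{L×m}, X'(k) ∈ ℝ^{p×L}, λ_1, …, λ_{N-1} > 0, and f(C) = ½ Σ_{k=0}^{N−1} ‖D(k) C(k) − X'(k)ᵀ‖_F² + ½ Σ_{k=1}^{N−1} λ_k ‖C(k) − C(k−1)‖_F². If Σ_{k=0}^{N−1} D(k)ᵀ D(k) is positive definite, then f is strictly convex on ((ℝ^{m×p})^N. -/
open Matrix

/-!
The cost is quadratic in `C`, so along a segment it falls short of the chord by exactly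
`t (1 - t)` times its purely quadratic part evaluated at `Δ = C - C'`, which is the cost with
`X' = 0`. That part vanishes only when every `D k * Δ k = 0` and `Δ` is constant in `k`; then
`(Σ D kᵀ D k) * Δ 0 = 0`, and positive definiteness forces `Δ = 0`.
-/

lemma frobSq_nonneg {α β : Type*} [Fintype α] [Fintype β] (M : Matrix α β ℝ) :
    0 ≤ frobSq M :=
  Finset.sum_nonneg fun _ _ => Finset.sum_nonneg fun _ _ => sq_nonneg _

lemma frobSq_eq_zero_iff {α β : Type*} [Fintype α] [Fintype β] {M : Matrix α β ℝ} :
    frobSq M = 0 ↔ M = 0 := by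
  simp [frobSq, Finset.sum_eq_zero_iff_of_nonneg, sq_nonneg, Finset.sum_nonneg,
    ← Matrix.ext_iff]

lemma frobSq_smul_add_smul {α β : Type*} [Fintype α] [Fintype β] (t : ℝ) (A B : Matrix α β ℝ) :
    frobSq (t • A + (1 - t) • B) =
      t * frobSq A + (1 - t) * frobSq B - t * (1 - t) * frobSq (A - B) := by
  simp only [frobSq, Finset.mul_sum, ← Finset.sum_sub_distrib, ← Finset.sum_add_distrib,
    Matrix.add_apply, Matrix.smul_apply, Matrix.sub_apply, smul_eq_mul]
  exact Finset.sum_congr rfl fun _ _ => Finset.sum_congr rfl fun _ _ => by ring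

lemma Matrix.PosDef.eq_zero_of_mul_eq_zero {m n K : Type*} [Fintype n] [DecidableEq n] [Field K]
    [PartialOrder K] [StarRing K] {M : Matrix n n K} (hM : M.PosDef) {B : Matrix n m K}
    (h : M * B = 0) : B = 0 := by
  rw [← nonsing_inv_mul_cancel_left M B ((isUnit_iff_isUnit_det M).mp hM.isUnit), h,
    Matrix.mul_zero]

lemma Fin.apply_eq_apply_zero_of_succ_eq_castSucc {α : Type*} {n : ℕ} {f : Fin (n + 1) → α}
    (h : ∀ k : Fin n, f k.succ = f k.castSucc) (k : Fin (n + 1)) : f k = f 0 := by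
  induction k using Fin.induction with
  | zero => rfl
  | succ k ih => rw [h k, ih]

section cost

variable {p q n L : ℕ} (D : Fin (n + 1) → Matrix (Fin L) (Fin (p + q)) ℝ)
  (X' : Fin (n + 1) → Matrix (Fin p) (Fin L) ℝ) (lam : Fin n → ℝ)

lemma cost_smul_add_smul (C C' : Fin (n + 1) → Matrix (Fin (p + q)) (Fin p) ℝ) (t : ℝ) :
    cost p q n L D X' lam (t • C + (1 - t) • C') =
      t * cost p q n L D X' lam C + (1 - t) * cost p q n L D X' lam C' -
        t * (1 - t) * cost p q n L D 0 lam (C - C') := by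
  have hfit : ∀ k, D k * (t • C + (1 - t) • C') k - (X' k)ᵀ =
      t • (D k * C k - (X' k)ᵀ) + (1 - t) • (D k * C' k - (X' k)ᵀ) := fun k => by
    simp only [Pi.add_apply, Pi.smul_apply, Matrix.mul_add, Matrix.mul_smul]
    module
  have hsmooth : ∀ k : Fin n,
      (t • C + (1 - t) • C') k.succ - (t • C + (1 - t) • C') k.castSucc =
        t • (C k.succ - C k.castSucc) + (1 - t) • (C' k.succ - C' k.castSucc) := fun k => by
    simp only [Pi.add_apply, Pi.smul_apply]
    module
  simp only [cost, hfit, hsmooth, frobSq_smul_add_smul, Pi.sub_apply, Pi.zero_apply,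
    transpose_zero, sub_zero, Matrix.mul_sub, sub_sub_sub_cancel_right, sub_sub_sub_comm,
    mul_sub, mul_add, mul_left_comm (lam _), Finset.sum_sub_distrib, Finset.sum_add_distrib,
    ← Finset.mul_sum]
  ring

lemma cost_zero_pos (hlam : ∀ k, 0 < lam k) (hpos : (∑ k, (D k)ᵀ * D k).PosDef)
    {Δ : Fin (n + 1) → Matrix (Fin (p + q)) (Fin p) ℝ} (hΔ : Δ ≠ 0) :
    0 < cost p q n L D 0 lam Δ := by
  have hcost : cost p q n L D 0 lam Δ = (1 / 2) * ∑ k, frobSq (D k * Δ k) +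
      (1 / 2) * ∑ k, lam k * frobSq (Δ k.succ - Δ k.castSucc) := by
    simp [cost]
  have hfit_nonneg : ∀ k ∈ Finset.univ, 0 ≤ frobSq (D k * Δ k) := fun k _ => frobSq_nonneg _
  have hsmooth_nonneg : ∀ k ∈ Finset.univ, 0 ≤ lam k * frobSq (Δ k.succ - Δ k.castSucc) :=
    fun k _ => mul_nonneg (hlam k).le (frobSq_nonneg _)
  have hS₁ := Finset.sum_nonneg hfit_nonneg
  have hS₂ := Finset.sum_nonneg hsmooth_nonneg
  rw [hcost]
  by_contra! hle
  have hfit : ∀ k, D k * Δ k = 0 := fun k => frobSq_eq_zero_iff.mp <|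
    (Finset.sum_eq_zero_iff_of_nonneg hfit_nonneg).mp (by linarith) k (Finset.mem_univ k)
  have hsmooth : ∀ k : Fin n, Δ k.succ = Δ k.castSucc := fun k => sub_eq_zero.mp <|
    frobSq_eq_zero_iff.mp <| (mul_eq_zero.mp <| (Finset.sum_eq_zero_iff_of_nonneg
      hsmooth_nonneg).mp (by linarith) k (Finset.mem_univ k)).resolve_left (hlam k).ne'
  have hconst := Fin.apply_eq_apply_zero_of_succ_eq_castSucc hsmooth
  have h0 : Δ 0 = 0 := hpos.eq_zero_of_mul_eq_zero <| by
    rw [Matrix.sum_mul]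
    exact Finset.sum_eq_zero fun k _ => by
      rw [Matrix.mul_assoc, ← hconst k, hfit k, Matrix.mul_zero]
  exact hΔ (funext fun k => (hconst k).trans h0)

end cost

theorem stmt_9_general (p q n L : ℕ)
    (D : Fin (n + 1) → Matrix (Fin L) (Fin (p + q)) ℝ)
    (X' : Fin (n + 1) → Matrix (Fin p) (Fin L) ℝ)
    (lam : Fin n → ℝ) (hlam : ∀ k, 0 < lam k)
    (hpos : (∑ k : Fin (n + 1), (D k)ᵀ * D k).PosDef) :
    ∀ C C' : Fin (n + 1) → Matrix (Fin (p + q)) (Fin p) ℝ, C ≠ C' →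
      ∀ t : ℝ, 0 < t → t < 1 →
        cost p q n L D X' lam (t • C + (1 - t) • C') <
          t * cost p q n L D X' lam C + (1 - t) * cost p q n L D X' lam C' := by
  intro C C' hne t ht ht1
  have hgap := cost_zero_pos D lam hlam hpos (sub_ne_zero.mpr hne)
  rw [cost_smul_add_smul]
  linarith [mul_pos (mul_pos ht (sub_pos.mpr ht1)) hgap]

/-- If `Σ_{k=0}^{N−1} D(k)ᵀ D(k)` is positive definite, then the regularized
least-squares identification cost `f` is strictly convex on `(ℝ^{(p+q)×p})^N`:
`f(tC + (1−t)C') < t f(C) + (1−t) f(C')` for all `C ≠ C'` and `t ∈ (0,1)`. -/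
theorem stmt_9 (p q n L : ℕ) (hp : 0 < p) (hq : 0 < q) (hL : 0 < L)
    (D : Fin (n + 1) → Matrix (Fin L) (Fin (p + q)) ℝ)
    (X' : Fin (n + 1) → Matrix (Fin p) (Fin L) ℝ)
    (lam : Fin n → ℝ) (hlam : ∀ k, 0 < lam k)
    (hpos : (∑ k : Fin (n + 1), (D k)ᵀ * D k).PosDef) :
    ∀ C C' : Fin (n + 1) → Matrix (Fin (p + q)) (Fin p) ℝ, C ≠ C' →
      ∀ t : ℝ, 0 < t → t < 1 →
        cost p q n L D X' lam (t • C + (1 - t) • C') <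
          t * cost p q n L D X' lam C + (1 - t) * cost p q n L D X' lam C' :=
  stmt_9_general p q n L D X' lam hlam hpos
end

section
/- Fix positive integers m, p, N ≥ 1, reals λ_1, …, λ_{N-1}, symmetric m×m matrices S_00, …, S_{N-1,N-1}, and right-hand sides Θ_0, …, Θ_{N-1} ∈ ℝ^{m×p}. Define Λ_0 = S_00 and Λ_k = S_kk − λ_k² Λ_{k−1}^{-1}, and assume each Λ_k is invertible. Define the forward pass Y_0 = Λ_0^{-1} Θ_0, Y_k = Λ_k^{-1}(Θ_k + λ_k Y_{k−1}) for k = 1, …, N−1, and the backward pass C(N−1) = Y_{N−1}, C(k) = Y_k + λ_{k+1} Λ_k^{-1} C(k+1) for k = N−2, …, 0. Then the tuple C = (C(0), …, C(N−1)) satisfies the block tridiagonal system S_kk C(k) − λ_k C(k−1) − λ_{k+1} C(k+1) = Θ_k for all k (with the convention that the terms with C(−1) and C(N) are absent), i.e. 𝒜 C = Θ where 𝒜 is the block tridiagonal matrix with diagonal blocks S_kk and off-diagonal blocks −λ_k I. -/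
/-!
Since `S_kk = Λ_k + λ_k² Λ_{k-1}⁻¹`, substituting the backward recursion for `C(k-1)` gives
`S_kk C(k) - λ_k C(k-1) = Λ_k C(k) - λ_k Y_{k-1}`; the backward recursion at `k` itself gives
`Λ_k C(k) - λ_{k+1} C(k+1) = Λ_k Y_k`, and the forward recursion gives
`Λ_k Y_k = Θ_k + λ_k Y_{k-1}`. Combining the three, the `λ_k Y_{k-1}` terms cancel.
-/

open Matrix

namespace Cosmic

section Tridiagonal

variable {R M : Type*} [Zero M] [SMul R M] {n : ℕ}

/-- `lam j` is the coupling weight between blocks `j` and `j + 1` (the paper's `λ_{j+1}`). -/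
def subdiagTerm (lam : Fin n → R) (X : Fin (n + 1) → M) (k : Fin (n + 1)) : M :=
  if h : 0 < (k : ℕ) then
    lam ⟨(k : ℕ) - 1, Nat.sub_lt_right_of_lt_add h k.isLt⟩ •
      X ⟨(k : ℕ) - 1, (Nat.sub_le _ _).trans_lt k.isLt⟩
  else 0

def superdiagTerm (lam : Fin n → R) (X : Fin (n + 1) → M) (k : Fin (n + 1)) : M :=
  if h : (k : ℕ) < n then lam ⟨(k : ℕ), h⟩ • X ⟨(k : ℕ) + 1, Nat.succ_lt_succ h⟩ else 0

variable (lam : Fin n → R) (X : Fin (n + 1) → M)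

@[simp]
lemma subdiagTerm_zero : subdiagTerm lam X 0 = 0 := by
  simp [subdiagTerm]

@[simp]
lemma subdiagTerm_succ (j : Fin n) : subdiagTerm lam X j.succ = lam j • X j.castSucc :=
  rfl

@[simp]
lemma superdiagTerm_last : superdiagTerm lam X (Fin.last n) = 0 := by
  simp [superdiagTerm]

@[simp]
lemma superdiagTerm_castSucc (j : Fin n) :
    superdiagTerm lam X j.castSucc = lam j • X j.succ := by
  simp [superdiagTerm, Fin.succ]

end Tridiagonal

section Recursion

variable {R : Type*} [CommRing R] {l o : Type*} [Fintype l]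

lemma mul_sub_smul_add_smul_mul (S B : Matrix l l R) (Y C : Matrix l o R) (a : R) :
    S * C - a • (Y + a • (B * C)) = (S - a ^ 2 • B) * C - a • Y := by
  rw [Matrix.sub_mul, Matrix.smul_mul, smul_add, smul_smul, ← pow_two]
  abel

variable [DecidableEq l] {n : ℕ} (lam : Fin n → R) (S Lam : Fin (n + 1) → Matrix l l R)
  (Θ Y C : Fin (n + 1) → Matrix l o R)

lemma mul_sub_subdiagTerm_backward (hLam0 : Lam 0 = S 0)
    (hLamS : ∀ k : Fin n, Lam k.succ = S k.succ - lam k ^ 2 • (Lam k.castSucc)⁻¹)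
    (hCs : ∀ k : Fin n, C k.castSucc = Y k.castSucc + lam k • ((Lam k.castSucc)⁻¹ * C k.succ))
    (k : Fin (n + 1)) :
    S k * C k - subdiagTerm lam C k = Lam k * C k - subdiagTerm lam Y k := by
  induction k using Fin.cases with
  | zero => simp [hLam0]
  | succ j => rw [subdiagTerm_succ, subdiagTerm_succ, hCs j, hLamS j, mul_sub_smul_add_smul_mul]

lemma mul_sub_superdiagTerm_backward (hInv : ∀ k, IsUnit (Lam k).det)
    (hClast : C (Fin.last n) = Y (Fin.last n))
    (hCs : ∀ k : Fin n, C k.castSucc = Y k.castSucc + lam k • ((Lam k.castSucc)⁻¹ * C k.succ))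
    (k : Fin (n + 1)) :
    Lam k * C k - superdiagTerm lam C k = Lam k * Y k := by
  induction k using Fin.lastCases with
  | last => rw [superdiagTerm_last, sub_zero, hClast]
  | cast j =>
    rw [superdiagTerm_castSucc, hCs j, Matrix.mul_add, Matrix.mul_smul,
      mul_nonsing_inv_cancel_left _ _ (hInv _), add_sub_cancel_right]

lemma mul_forward_eq (hInv : ∀ k, IsUnit (Lam k).det) (hY0 : Y 0 = (Lam 0)⁻¹ * Θ 0)
    (hYs : ∀ k : Fin n, Y k.succ = (Lam k.succ)⁻¹ * (Θ k.succ + lam k • Y k.castSucc))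
    (k : Fin (n + 1)) :
    Lam k * Y k = Θ k + subdiagTerm lam Y k := by
  induction k using Fin.cases with
  | zero => rw [hY0, mul_nonsing_inv_cancel_left _ _ (hInv 0), subdiagTerm_zero, add_zero]
  | succ j => rw [hYs j, mul_nonsing_inv_cancel_left _ _ (hInv _), subdiagTerm_succ]

end Recursion

end Cosmic

open Cosmic

/-- (Correctness of the forward/backward pass of the COSMIC algorithm.)
With symmetric diagonal blocks `S_kk` (`k = 0, …, N−1`, `N = n + 1`), weights
`λ_1, …, λ_{N-1}`, recursively defined `Λ_0 = S_00`, `Λ_k = S_kk − λ_k² Λ_{k−1}⁻¹` (all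
invertible), forward pass `Y_0 = Λ_0⁻¹ Θ_0`, `Y_k = Λ_k⁻¹(Θ_k + λ_k Y_{k−1})`, and backward
pass `C(N−1) = Y_{N−1}`, `C(k) = Y_k + λ_{k+1} Λ_k⁻¹ C(k+1)`, the resulting tuple `C`
satisfies the block tridiagonal system
`S_kk C(k) − λ_k C(k−1) − λ_{k+1} C(k+1) = Θ_k` for all `k`
(with the conventions `λ_0 = λ_N = 0`, so the terms with `C(−1)` and `C(N)` are absent). -/
theorem stmt_14 (m p n : ℕ) (lam : Fin n → ℝ)
    (S : Fin (n + 1) → Matrix (Fin m) (Fin m) ℝ)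
    (Θ : Fin (n + 1) → Matrix (Fin m) (Fin p) ℝ)
    (Lam : Fin (n + 1) → Matrix (Fin m) (Fin m) ℝ)
    (hLam0 : Lam 0 = S 0)
    (hLamS : ∀ k : Fin n, Lam k.succ = S k.succ - (lam k) ^ 2 • (Lam k.castSucc)⁻¹)
    (hInv : ∀ k, IsUnit (Lam k).det)
    (Y : Fin (n + 1) → Matrix (Fin m) (Fin p) ℝ)
    (hY0 : Y 0 = (Lam 0)⁻¹ * Θ 0)
    (hYs : ∀ k : Fin n, Y k.succ = (Lam k.succ)⁻¹ * (Θ k.succ + lam k • Y k.castSucc))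
    (C : Fin (n + 1) → Matrix (Fin m) (Fin p) ℝ)
    (hClast : C (Fin.last n) = Y (Fin.last n))
    (hCs : ∀ k : Fin n, C k.castSucc = Y k.castSucc + lam k • ((Lam k.castSucc)⁻¹ * C k.succ)) :
    ∀ k : Fin (n + 1),
      S k * C k -
        (if h : 0 < (k : ℕ) then
          lam ⟨(k : ℕ) - 1, by have := k.isLt; omega⟩ •
            C ⟨(k : ℕ) - 1, by have := k.isLt; omega⟩
         else 0) -
        (if h : (k : ℕ) < n then
          lam ⟨(k : ℕ), h⟩ • C ⟨(k : ℕ) + 1, by omega⟩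
         else 0) = Θ k := by
  intro k
  change S k * C k - subdiagTerm lam C k - superdiagTerm lam C k = Θ k
  rw [mul_sub_subdiagTerm_backward lam S Lam Y C hLam0 hLamS hCs, sub_right_comm,
    mul_sub_superdiagTerm_backward lam Lam Y C hInv hClast hCs,
    mul_forward_eq lam Lam Θ Y hInv hY0 hYs, add_sub_cancel_right]
end
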